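/- arXiv:1806.04984 — 3 statements merged into one kernel-verified Lean document; each statement's English description precedes it below -/
import Mathlib

section
/- (Parallelogram inequality of Stuhler–Grayson.) Let L₁ and L₂ be sublattices of a Euclidean lattice L with L₁ not contained in L₂. Then μ(L₁ / (L₁ ∩ L₂)) ≥ μ((L₁ + L₂) / L₂), where L₁/(L₁ ∩ L₂) is the quotient lattice of L₁ by its sublattice L₁ ∩ L₂, and (L₁ + L₂)/L₂ is the image of L₁ + L₂ under orthogonal projection onto the orthogonal complement of the real span of L₂. -/
open scoped RealInnerProductSpace Classical

noncomputable section

section LatticeDefs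

variable {E : Type*} [NormedAddCommGroup E] [InnerProductSpace ℝ E] [FiniteDimensional ℝ E]

/-- `L` is a Euclidean lattice in `E`: a finitely generated discrete `ℤ`-submodule
spanning `E` over `ℝ`. -/
def IsEucLattice (L : Submodule ℤ E) : Prop :=
  L.FG ∧ DiscreteTopology L ∧ Submodule.span ℝ (L : Set E) = ⊤

/-- The rank of a lattice: the dimension of its real span. -/
def latRank (L : Submodule ℤ E) : ℕ :=
  Module.finrank ℝ (Submodule.span ℝ (L : Set E))

/-- The volume of a lattice: the square root of the Gram determinant of a `ℤ`-basis
(set to `0` if no finite `ℤ`-basis exists). -/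
def latVol (L : Submodule ℤ E) : ℝ :=
  if h : ∃ n : ℕ, Nonempty (Module.Basis (Fin n) ℤ L) then
    Real.sqrt (Matrix.det (Matrix.of fun i j : Fin h.choose =>
      ⟪(↑(h.choose_spec.some i) : E), (↑(h.choose_spec.some j) : E)⟫))
  else 0

/-- The slope `μ(L) = (vol L) ^ (1 / rk L)`. -/
def latSlope (L : Submodule ℤ E) : ℝ :=
  latVol L ^ ((latRank L : ℝ)⁻¹)

/-- `M` is a (primitive) sublattice of `L`: `M = L ∩ F` for a real subspace `F`. -/
def IsSublatticeOf (L M : Submodule ℤ E) : Prop :=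
  ∃ F : Submodule ℝ E, M = L ⊓ F.restrictScalars ℤ

/-- The minimal slope: the infimum (in fact minimum) of slopes of nonzero sublattices. -/
def muMin (L : Submodule ℤ E) : ℝ :=
  sInf (latSlope '' {M : Submodule ℤ E | IsSublatticeOf L M ∧ M ≠ ⊥})

/-- The orthogonal projection of `E` onto a subspace `F`, as a `ℤ`-linear endomorphism. -/
def projMap (F : Submodule ℝ E) : E →ₗ[ℤ] E :=
  ((F.subtype.comp (F.orthogonalProjectionOnto).toLinearMap)).restrictScalars ℤ

/-- The image `π_F(L)` of a lattice under orthogonal projection onto `F`. -/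
def projLat (F : Submodule ℝ E) (L : Submodule ℤ E) : Submodule ℤ E :=
  L.map (projMap F)

lemma projMap_mem_projLat (F : Submodule ℝ E) (L : Submodule ℤ E) {x : E} (hx : x ∈ L) :
    projMap F x ∈ projLat F L :=
  Submodule.mem_map_of_mem hx

/-- The quotient lattice `L/M`: the image of `L` under the orthogonal projection onto the
orthogonal complement of the real span of `M`. -/
def quotLat (L M : Submodule ℤ E) : Submodule ℤ E :=
  projLat (Submodule.span ℝ (M : Set E))ᗮ L

/-- The maximal slope: the supremum (in fact maximum) of `μ(L/N)` over proper sublattices. -/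
def muMax (L : Submodule ℤ E) : ℝ :=
  sSup ((fun N => latSlope (quotLat L N)) '' {N : Submodule ℤ E | IsSublatticeOf L N ∧ N ≠ L})

/-- `L` is semistable if its minimal slope equals its slope. -/
def Semistable (L : Submodule ℤ E) : Prop :=
  muMin L = latSlope L

/-- `D` is the destabilizing sublattice of `L`: the maximal nonzero sublattice of slope
`μ_min(L)`. -/
def IsDestab (L D : Submodule ℤ E) : Prop :=
  IsSublatticeOf L D ∧ D ≠ ⊥ ∧ latSlope D = muMin L ∧
    ∀ M : Submodule ℤ E, IsSublatticeOf L M → M ≠ ⊥ → latSlope M = muMin L → M ≤ D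

/-- `N₀` is the co-destabilizing sublattice of `L`: the minimal proper sublattice with
`μ(L/N₀) = μ_max(L)`. -/
def IsCodestab (L N₀ : Submodule ℤ E) : Prop :=
  IsSublatticeOf L N₀ ∧ N₀ ≠ L ∧ latSlope (quotLat L N₀) = muMax L ∧
    ∀ N : Submodule ℤ E, IsSublatticeOf L N → N ≠ L → latSlope (quotLat L N) = muMax L → N₀ ≤ N

/-- The dual lattice `L* = {y | ⟨x, y⟩ ∈ ℤ for all x ∈ L}`. -/
def dualLat (L : Submodule ℤ E) : Submodule ℤ E :=
  ⨅ x ∈ L, Submodule.comap (((innerSL ℝ x).toLinearMap).restrictScalars ℤ)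
    (Submodule.span ℤ ({1} : Set ℝ))

end LatticeDefs

section TensorDefs

variable {E F G : Type*}
  [NormedAddCommGroup E] [InnerProductSpace ℝ E] [FiniteDimensional ℝ E]
  [NormedAddCommGroup F] [InnerProductSpace ℝ F] [FiniteDimensional ℝ F]
  [NormedAddCommGroup G] [InnerProductSpace ℝ G] [FiniteDimensional ℝ G]

/-- `t : E → F → G` realizes `G` as the tensor product `E ⊗ F` of inner product spaces:
it satisfies `⟨x ⊗ y, x' ⊗ y'⟩ = ⟨x, x'⟩⟨y, y'⟩`, its image spans `G`, and
`dim G = dim E · dim F`. -/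
def IsTensorProdMap (t : E →ₗ[ℝ] F →ₗ[ℝ] G) : Prop :=
  (∀ (x x' : E) (y y' : F), ⟪t x y, t x' y'⟫ = ⟪x, x'⟫ * ⟪y, y'⟫) ∧
  Submodule.span ℝ (Set.range fun p : E × F => t p.1 p.2) = ⊤ ∧
  Module.finrank ℝ G = Module.finrank ℝ E * Module.finrank ℝ F

/-- The tensor product lattice `L ⊗ M` inside the model `G` of `E ⊗ F`. -/
def tensorLat (t : E →ₗ[ℝ] F →ₗ[ℝ] G) (L : Submodule ℤ E) (M : Submodule ℤ F) :
    Submodule ℤ G :=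
  Submodule.span ℤ {z : G | ∃ x ∈ L, ∃ y ∈ M, z = t x y}

/-- The "tensor product" of two subspaces inside the model `G` of `E ⊗ F`. -/
def tensorSub (t : E →ₗ[ℝ] F →ₗ[ℝ] G) (A : Submodule ℝ E) (B : Submodule ℝ F) :
    Submodule ℝ G :=
  Submodule.span ℝ {z : G | ∃ x ∈ A, ∃ y ∈ B, z = t x y}

end TensorDefs

end

/-!
Write `F` for the real span of `L₂`, `K ⊆ F` for that of `L₁ ∩ L₂`, and `π_F`, `π_K` for the
orthogonal projections onto `Fᗮ`, `Kᗮ`. Since `π_F` kills `L₂` and `π_F ∘ π_K = π_F`, the lattice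
`(L₁ + L₂)/L₂` is the image of `L₁/(L₁ ∩ L₂)` under `π_F`. This map is injective because `L₂` is
primitive in `L`: an `x ∈ L₁` with `π_F x = 0` lies in `L ∩ F = L₂`, hence in `L₁ ∩ L₂`. So a
`ℤ`-basis `b` of `L₁/(L₁ ∩ L₂)` is carried to a `ℤ`-basis `π_F ∘ b` of `(L₁ + L₂)/L₂`, and
`Gram b = Gram (π_F ∘ b) + Gram (b - π_F ∘ b)`. The determinant is monotone on positive
semidefinite matrices, so the volume can only drop, while the rank is preserved whenever the
smaller volume is nonzero.
-/

open Matrix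
open Module (Basis)

namespace Matrix

section Determinant

variable {n : Type*} [Fintype n] [DecidableEq n]

lemma PosSemidef.one_le_det_one_add {N : Matrix n n ℝ} (hN : N.PosSemidef) :
    1 ≤ (1 + N).det := by
  have hH : (1 + N).IsHermitian := (PosSemidef.one.add hN).1
  rw [hH.det_eq_prod_eigenvalues]
  refine Finset.one_le_prod fun i _ => ?_
  set v := hH.eigenvectorBasis i
  have hv : star ⇑v ⬝ᵥ ⇑v = 1 := by
    rw [dotProduct_comm, ← EuclideanSpace.inner_eq_star_dotProduct,
      real_inner_self_eq_norm_sq, hH.eigenvectorBasis.orthonormal.1 i, one_pow]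
  have hNv := hN.re_dotProduct_nonneg v
  rw [hH.eigenvalues_eq i, add_mulVec, one_mulVec, dotProduct_add, hv]
  simpa using hNv

open scoped MatrixOrder in
lemma PosSemidef.det_le_det_add {A B : Matrix n n ℝ} (hA : A.PosSemidef) (hB : B.PosSemidef) :
    A.det ≤ (A + B).det := by
  by_cases hdet : A.det = 0
  · exact hdet ▸ (hA.add hB).det_nonneg
  set S := CFC.sqrt A
  have hS : S.IsHermitian := (nonneg_iff_posSemidef.mp (CFC.sqrt_nonneg A)).1
  have hSS : S * S = A := CFC.sqrt_mul_sqrt_self A (nonneg_iff_posSemidef.mpr hA)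
  have hSdet : IsUnit S.det := by
    rw [isUnit_iff_ne_zero]
    intro h
    exact hdet (by rw [← hSS, det_mul, h, zero_mul])
  have hN : (S⁻¹ * B * S⁻¹).PosSemidef := by
    simpa only [hS.inv.eq] using hB.mul_mul_conjTranspose_same S⁻¹
  have hfactor : A + B = S * (1 + S⁻¹ * B * S⁻¹) * S := by
    rw [Matrix.mul_add, Matrix.add_mul, ← hSS]
    simp [Matrix.mul_assoc, Matrix.nonsing_inv_mul S hSdet,
      Matrix.mul_nonsing_inv_cancel_left S _ hSdet]
  calc A.det = A.det * 1 := (mul_one _).symm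
    _ ≤ A.det * (1 + S⁻¹ * B * S⁻¹).det :=
        mul_le_mul_of_nonneg_left hN.one_le_det_one_add hA.det_nonneg
    _ = (A + B).det := by rw [hfactor, det_mul, det_mul, ← hSS, det_mul]; ring

end Determinant

variable {E : Type*} [NormedAddCommGroup E] [InnerProductSpace ℝ E] {n m : Type*}

lemma gram_sum_smul [Fintype n] (v : n → E) (Q : Matrix n m ℝ) :
    gram ℝ (fun j => ∑ i, Q i j • v i) = Qᵀ * gram ℝ v * Q := by
  ext j k
  simp only [gram_apply, sum_inner, inner_sum, real_inner_smul_left, real_inner_smul_right,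
    mul_apply, transpose_apply, Finset.sum_mul]
  exact Finset.sum_congr rfl fun _ _ => Finset.sum_congr rfl fun _ _ => by ring

lemma gram_eq_gram_starProjection_add (W : Submodule ℝ E) [W.HasOrthogonalProjection]
    (v : n → E) :
    gram ℝ v = gram ℝ (W.starProjection ∘ v) + gram ℝ (Wᗮ.starProjection ∘ v) := by
  ext i j
  have hcross : ∀ x y : E, ⟪W.starProjection x, Wᗮ.starProjection y⟫ = 0 := fun x y =>
    Submodule.inner_right_of_mem_orthogonal (W.starProjection_apply_mem x)
      (Wᗮ.starProjection_apply_mem y)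
  have hcross' : ∀ x y : E, ⟪Wᗮ.starProjection x, W.starProjection y⟫ = 0 := fun x y =>
    Submodule.inner_left_of_mem_orthogonal (W.starProjection_apply_mem y)
      (Wᗮ.starProjection_apply_mem x)
  conv_lhs => rw [gram_apply, ← W.starProjection_add_starProjection_orthogonal (v i),
    ← W.starProjection_add_starProjection_orthogonal (v j)]
  simp only [inner_add_left, inner_add_right, hcross, hcross', add_apply, gram_apply,
    Function.comp_apply]
  ring

end Matrix

namespace Module.Basis

variable {E : Type*} [NormedAddCommGroup E] [InnerProductSpace ℝ E] {M : Submodule ℤ E}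

lemma coe_eq_sum_toMatrix_smul {ι κ : Type*} [Fintype ι] (b : Basis ι ℤ M) (c : κ → M)
    (j : κ) : (c j : E) = ∑ i, ((b.toMatrix c i j : ℤ) : ℝ) • (b i : E) := by
  conv_lhs => rw [← b.sum_toMatrix_smul_self c j]
  simp only [Submodule.coe_sum, Submodule.coe_smul_of_tower, Int.cast_smul_eq_zsmul]

lemma det_gram_coe_eq {n m : ℕ} (b : Basis (Fin n) ℤ M) (c : Basis (Fin m) ℤ M) :
    (gram ℝ fun i => (c i : E)).det = (gram ℝ fun i => (b i : E)).det := by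
  obtain rfl : m = n := by simpa using Fintype.card_congr (c.indexEquiv b)
  set Q := (b.toMatrix c).map (Int.cast : ℤ → ℝ)
  have hgram : gram ℝ (fun i => (c i : E)) = Qᵀ * gram ℝ (fun i => (b i : E)) * Q := by
    rw [← gram_sum_smul]
    exact congrArg _ (funext (b.coe_eq_sum_toMatrix_smul c))
  have hQ : Q.det * Q.det = 1 := by
    have hunit : IsUnit (b.toMatrix c).det :=
      IsUnit.of_mul_eq_one _ (by rw [← det_mul, b.toMatrix_mul_toMatrix_flip, det_one])
    have hQdet : Q.det = ((b.toMatrix c).det : ℝ) := ((Int.castRingHom ℝ).map_det _).symm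
    rcases Int.isUnit_iff.mp hunit with h | h <;> simp [hQdet, h]
  rw [hgram, det_mul, det_mul, det_transpose]
  linear_combination (gram ℝ fun i => (b i : E)).det * hQ

lemma span_coe_eq_span_range {ι : Type*} (b : Basis ι ℤ M) :
    Submodule.span ℝ (M : Set E) = Submodule.span ℝ (Set.range fun i => (b i : E)) := by
  have hM : Submodule.span ℤ (Set.range fun i => (b i : E)) = M := by
    rw [Set.range_comp', ← Submodule.coe_subtype, Submodule.span_image, b.span_eq,
      Submodule.map_top, Submodule.range_subtype]
  conv_lhs => rw [← hM, Submodule.span_span_of_tower]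

end Module.Basis

section EuclideanLattice

variable {E : Type*} [NormedAddCommGroup E] [InnerProductSpace ℝ E]

lemma latVol_eq_sqrt_det_gram {M : Submodule ℤ E} {n : ℕ} (b : Basis (Fin n) ℤ M) :
    latVol M = √(gram ℝ fun i => (b i : E)).det := by
  have hex : ∃ k : ℕ, Nonempty (Basis (Fin k) ℤ M) := ⟨n, ⟨b⟩⟩
  rw [latVol, dif_pos hex]
  exact congrArg (√·) (b.det_gram_coe_eq _)

lemma exists_basis_of_latVol_ne_zero {M : Submodule ℤ E} (h : latVol M ≠ 0) :
    ∃ n : ℕ, Nonempty (Basis (Fin n) ℤ M) := by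
  by_contra hb
  exact h (dif_neg hb)

lemma latVol_nonneg (M : Submodule ℤ E) : 0 ≤ latVol M := by
  unfold latVol
  split_ifs <;> positivity

lemma latSlope_nonneg (M : Submodule ℤ E) : 0 ≤ latSlope M :=
  Real.rpow_nonneg (latVol_nonneg M) _

lemma latVol_bot : latVol (⊥ : Submodule ℤ E) = 1 := by
  rw [latVol_eq_sqrt_det_gram (Basis.empty (ι := Fin 0) _)]
  simp

lemma latRank_eq_of_linearIndependent {M : Submodule ℤ E} {n : ℕ} (b : Basis (Fin n) ℤ M)
    (hb : LinearIndependent ℝ fun i => (b i : E)) : latRank M = n := by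
  rw [latRank, b.span_coe_eq_span_range, finrank_span_eq_card hb, Fintype.card_fin]

lemma IsSublatticeOf.le {L M : Submodule ℤ E} (h : IsSublatticeOf L M) : M ≤ L := by
  obtain ⟨F, rfl⟩ := h
  exact inf_le_left

lemma IsSublatticeOf.mem_of_mem_span {L M : Submodule ℤ E} (h : IsSublatticeOf L M) {x : E}
    (hxL : x ∈ L) (hxM : x ∈ Submodule.span ℝ (M : Set E)) : x ∈ M := by
  obtain ⟨F, rfl⟩ := h
  exact ⟨hxL, (Submodule.span_le (R := ℝ) (p := F)).mpr (fun y hy => hy.2) hxM⟩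

variable [FiniteDimensional ℝ E]

lemma projMap_apply (W : Submodule ℝ E) (x : E) : projMap W x = W.starProjection x := rfl

lemma projMap_orthogonal_eq_zero_iff (W : Submodule ℝ E) {x : E} :
    projMap Wᗮ x = 0 ↔ x ∈ W := by
  rw [projMap_apply, Submodule.starProjection_apply_eq_zero_iff, Submodule.orthogonal_orthogonal]

lemma projMap_orthogonal_comp_of_le {K F : Submodule ℝ E} (h : K ≤ F) :
    (projMap Fᗮ).comp (projMap Kᗮ) = projMap Fᗮ :=
  LinearMap.ext fun x =>
    congr($(Submodule.starProjection_comp_starProjection_of_le (Submodule.orthogonal_le h)) x)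

lemma latSlope_eq_zero_of_latVol_eq_zero {M : Submodule ℤ E} (h : latVol M = 0) :
    latSlope M = 0 := by
  have hrank : latRank M ≠ 0 := by
    intro hr
    have hM : M = ⊥ := by
      have hspan : Submodule.span ℝ (M : Set E) = ⊥ := Submodule.finrank_eq_zero.mp hr
      rw [eq_bot_iff]
      intro x hx
      simpa [hspan] using Submodule.subset_span (R := ℝ) hx
    rw [hM, latVol_bot] at h
    exact one_ne_zero h
  rw [latSlope, h, Real.zero_rpow (inv_ne_zero (Nat.cast_ne_zero.mpr hrank))]

lemma latSlope_map_projMap_le (W : Submodule ℝ E) (M : Submodule ℤ E)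
    (hinj : ∀ x ∈ M, projMap W x = 0 → x = 0) :
    latSlope (M.map (projMap W)) ≤ latSlope M := by
  -- this case also covers the junk value `latVol = 0` of lattices without a finite `ℤ`-basis
  by_cases h0 : latVol (M.map (projMap W)) = 0
  · rw [latSlope_eq_zero_of_latVol_eq_zero h0]
    exact latSlope_nonneg M
  obtain ⟨n, ⟨c⟩⟩ := exists_basis_of_latVol_ne_zero h0
  have hinj' : Function.Injective ((projMap W).domRestrict M) := by
    rw [injective_iff_map_eq_zero]
    rintro ⟨x, hx⟩ h
    exact Subtype.ext (hinj x hx h)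
  let e : M ≃ₗ[ℤ] M.map (projMap W) := (LinearEquiv.ofInjective _ hinj').trans
    (LinearEquiv.ofEq _ _ (LinearMap.range_domRestrict _ _))
  let b := c.map e.symm
  have hc : (fun i => (c i : E)) = W.starProjection ∘ fun i => (b i : E) :=
    funext fun i => (congrArg Subtype.val (e.apply_symm_apply (c i))).symm
  have hdet : (gram ℝ fun i => (c i : E)).det ≤ (gram ℝ fun i => (b i : E)).det := by
    rw [gram_eq_gram_starProjection_add W (fun i => (b i : E)), hc]
    exact (posSemidef_gram ℝ _).det_le_det_add (posSemidef_gram ℝ _)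
  have hc_ind : LinearIndependent ℝ fun i => (c i : E) := by
    refine linearIndependent_of_det_gram_ne_zero fun h => h0 ?_
    rw [latVol_eq_sqrt_det_gram c, h, Real.sqrt_zero]
  have hb_ind : LinearIndependent ℝ fun i => (b i : E) := by
    rw [hc] at hc_ind
    exact hc_ind.of_comp _
  rw [latSlope, latSlope, latRank_eq_of_linearIndependent c hc_ind,
    latRank_eq_of_linearIndependent b hb_ind, latVol_eq_sqrt_det_gram c,
    latVol_eq_sqrt_det_gram b]
  gcongr

lemma quotLat_sup_eq_map_quotLat_inf (L₁ L₂ : Submodule ℤ E) :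
    quotLat (L₁ ⊔ L₂) L₂ =
      (quotLat L₁ (L₁ ⊓ L₂)).map (projMap (Submodule.span ℝ (L₂ : Set E))ᗮ) := by
  have hL₂ : L₂.map (projMap (Submodule.span ℝ (L₂ : Set E))ᗮ) = ⊥ := by
    rw [eq_bot_iff]
    rintro _ ⟨x, hx, rfl⟩
    exact (projMap_orthogonal_eq_zero_iff _).mpr (Submodule.subset_span hx)
  rw [quotLat, quotLat, projLat, projLat, ← Submodule.map_comp,
    projMap_orthogonal_comp_of_le (Submodule.span_mono (SetLike.coe_mono inf_le_right)),
    Submodule.map_sup, hL₂, sup_bot_eq]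

lemma eq_zero_of_projMap_eq_zero_of_mem_quotLat_inf {L L₁ L₂ : Submodule ℤ E} (h₁ : L₁ ≤ L)
    (h₂ : IsSublatticeOf L L₂) {y : E} (hy : y ∈ quotLat L₁ (L₁ ⊓ L₂))
    (hy₀ : projMap (Submodule.span ℝ (L₂ : Set E))ᗮ y = 0) : y = 0 := by
  obtain ⟨x, hx, rfl⟩ := hy
  rw [← LinearMap.comp_apply,
    projMap_orthogonal_comp_of_le (Submodule.span_mono (SetLike.coe_mono inf_le_right)),
    projMap_orthogonal_eq_zero_iff] at hy₀
  have hxL₂ : x ∈ L₂ := h₂.mem_of_mem_span (h₁ hx) hy₀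
  exact (projMap_orthogonal_eq_zero_iff _).mpr (Submodule.subset_span ⟨hx, hxL₂⟩)

end EuclideanLattice

theorem statement_6_general {E : Type*} [NormedAddCommGroup E] [InnerProductSpace ℝ E]
    [FiniteDimensional ℝ E] (L L₁ L₂ : Submodule ℤ E)
    (h1 : IsSublatticeOf L L₁) (h2 : IsSublatticeOf L L₂) :
    latSlope (quotLat L₁ (L₁ ⊓ L₂)) ≥ latSlope (quotLat (L₁ ⊔ L₂) L₂) := by
  rw [ge_iff_le, quotLat_sup_eq_map_quotLat_inf]
  exact latSlope_map_projMap_le _ _ fun y hy =>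
    eq_zero_of_projMap_eq_zero_of_mem_quotLat_inf h1.le h2 hy

/-- **parallelogram inequality of Stuhler–Grayson.** If `L₁`, `L₂` are
sublattices of `L` with `L₁ ⊄ L₂`, then `μ(L₁/(L₁ ∩ L₂)) ≥ μ((L₁ + L₂)/L₂)`. -/
theorem statement_6 {E : Type*} [NormedAddCommGroup E] [InnerProductSpace ℝ E]
    [FiniteDimensional ℝ E] (L L₁ L₂ : Submodule ℤ E)
    (hL : IsEucLattice L) (h1 : IsSublatticeOf L L₁) (h2 : IsSublatticeOf L L₂)
    (hns : ¬ L₁ ≤ L₂) :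
    latSlope (quotLat L₁ (L₁ ⊓ L₂)) ≥ latSlope (quotLat (L₁ ⊔ L₂) L₂) :=
  statement_6_general L L₁ L₂ h1 h2
end

section
/- Let G and H be finite groups and K a field whose characteristic is either zero or coprime to both |G| and |H|. Let E be a finite-dimensional K[G]-module which is multiplicity-free, say E = ⊕_{i=1}^r E_i with E_1, …, E_r pairwise non-isomorphic absolutely irreducible K[G]-submodules, and let F be a finite-dimensional K[H]-module. Regard E ⊗_K F as a K[G×H]-module via (g,h)·(x ⊗ y) = gx ⊗ hy. Then every K[G×H]-submodule U of E ⊗_K F is of the form U = ⊕_{i=1}^r E_i ⊗ F_i for some (possibly zero) K[H]-submodules F_1, …, F_r of F. -/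
/-!
Restricted to `G`, the module `V ⊗ W` is a sum of copies of the pairwise non-isomorphic absolutely
irreducible `Eᵢ`. By Schur's lemma every `G`-map `Eᵢ → V` is a scalar multiple of the inclusion;
reading coordinates in a basis of `W`, every `G`-map `Eᵢ → V ⊗ W` is then `v ↦ v ⊗ w`, so every
irreducible `G`-subspace of `V ⊗ W` is `Eᵢ ⊗ w` for some `i` and `w`. With
`Fᵢ = {w | Eᵢ ⊗ w ⊆ U}` we have `⊕ Eᵢ ⊗ Fᵢ ⊆ U`, and by Maschke this sum has a `G`-stable
complement in `U`; that complement contains no irreducible subspace, hence is zero.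
-/

noncomputable section

section RepDefs

open scoped TensorProduct

variable {K : Type*} [Field K] {G₀ : Type*} [Group G₀]
  {V : Type*} [AddCommGroup V] [Module K V]
  {W : Type*} [AddCommGroup W] [Module K W]

/-- A subspace invariant under a representation. -/
def RepInvariant (ρ : Representation K G₀ V) (p : Submodule K V) : Prop :=
  ∀ g : G₀, ∀ x ∈ p, ρ g x ∈ p

/-- A representation is irreducible if the space is nonzero and its only invariant
subspaces are `⊥` and `⊤`. -/
def RepIrreducible (ρ : Representation K G₀ V) : Prop :=
  Nontrivial V ∧ ∀ p : Submodule K V, RepInvariant ρ p → p = ⊥ ∨ p = ⊤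

/-- The restriction of a representation to an invariant subspace. -/
def repSub (ρ : Representation K G₀ V) (p : Submodule K V) (h : RepInvariant ρ p) :
    Representation K G₀ p where
  toFun g := (ρ g).restrict (h g)
  map_one' := by
    ext x
    simp [LinearMap.restrict_apply]
  map_mul' g g' := by
    ext x
    simp [LinearMap.restrict_apply]

/-- Extension of scalars of a representation. -/
def repBaseChange (K' : Type*) [Field K'] [Algebra K K'] (ρ : Representation K G₀ V) :
    Representation K' G₀ (K' ⊗[K] V) where
  toFun g := LinearMap.baseChange K' (ρ g)
  map_one' := by
    show LinearMap.baseChange K' (ρ 1) = 1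
    ext v
    simp
  map_mul' g g' := by
    show LinearMap.baseChange K' (ρ (g * g')) = _
    ext v
    simp [Module.End.mul_apply]

/-- A representation is absolutely irreducible if it stays irreducible after extension of
scalars to an algebraic closure. -/
def RepAbsIrreducible (ρ : Representation K G₀ V) : Prop :=
  RepIrreducible (repBaseChange (AlgebraicClosure K) ρ)

/-- Two representations of the same group are isomorphic (equivariantly). -/
def RepEquiv (ρ : Representation K G₀ V) (σ : Representation K G₀ W) : Prop :=
  ∃ e : V ≃ₗ[K] W, ∀ (g : G₀) (x : V), e (ρ g x) = σ g (e x)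

/-- `ρ` is multiplicity-free with `r` components: `V` is the direct sum of `r` pairwise
non-isomorphic absolutely irreducible invariant subspaces. -/
def RepMultFreeWith (ρ : Representation K G₀ V) (r : ℕ) : Prop :=
  ∃ (p : Fin r → Submodule K V) (hinv : ∀ i, RepInvariant ρ (p i)),
    (∀ i, RepAbsIrreducible (repSub ρ (p i) (hinv i))) ∧
    (∀ i j, i ≠ j → ¬ RepEquiv (repSub ρ (p i) (hinv i)) (repSub ρ (p j) (hinv j))) ∧
    iSupIndep p ∧ (⨆ i, p i) = ⊤

/-- `ρ` is multiplicity-free. -/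
def RepMultFree (ρ : Representation K G₀ V) : Prop :=
  ∃ r : ℕ, RepMultFreeWith ρ r

end RepDefs

section ProdTensorRep

open scoped TensorProduct

variable {K : Type*} [Field K] {G H : Type*} [Group G] [Group H]
  {V : Type*} [AddCommGroup V] [Module K V]
  {W : Type*} [AddCommGroup W] [Module K W]

/-- The tensor product representation of `G × H` on `V ⊗ W`. -/
def repProdTensor (ρ : Representation K G V) (σ : Representation K H W) :
    Representation K (G × H) (V ⊗[K] W) where
  toFun gh := TensorProduct.map (ρ gh.1) (σ gh.2)
  map_one' := by
    simp only [Prod.fst_one, Prod.snd_one, map_one]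
    exact TensorProduct.map_one
  map_mul' gh gh' := by
    simp only [Prod.fst_mul, Prod.snd_mul, map_mul]
    exact TensorProduct.map_mul _ _ _ _

end ProdTensorRep

end

open scoped TensorProduct

section Irreducible

variable {K : Type*} [Field K] {G : Type*} [Group G]
  {M : Type*} [AddCommGroup M] [Module K M]
  {N : Type*} [AddCommGroup N] [Module K N]

lemma RepInvariant.baseChange (L : Type*) [Field L] [Algebra K L]
    {τ : Representation K G M} {T : Submodule K M} (hT : RepInvariant τ T) :
    RepInvariant (repBaseChange L τ) (T.baseChange L) := by
  rintro g - ⟨y, rfl⟩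
  refine ⟨((τ g).restrict (hT g)).baseChange L y, ?_⟩
  change _ = (τ g).baseChange L (T.subtype.baseChange L y)
  rw [← LinearMap.comp_apply, ← LinearMap.baseChange_comp, ← LinearMap.comp_apply,
    ← LinearMap.baseChange_comp]
  rfl

lemma RepAbsIrreducible.repIrreducible {τ : Representation K G M}
    (habs : RepAbsIrreducible τ) : RepIrreducible τ := by
  obtain ⟨hnt, hirr⟩ := habs
  refine ⟨?_, fun T hT => ?_⟩
  · by_contra hM
    rw [not_nontrivial_iff_subsingleton] at hM
    exact not_subsingleton (AlgebraicClosure K ⊗[K] M) inferInstance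
  · rcases hirr _ (hT.baseChange (AlgebraicClosure K)) with h | h
    · rw [← Submodule.baseChange_bot] at h
      exact Or.inl (Submodule.baseChange_injective h)
    · rw [← Submodule.baseChange_top] at h
      exact Or.inr (Submodule.baseChange_injective h)

lemma LinearMap.exists_eq_smul_of_baseChange_eq_smul [Nontrivial M] (L : Type*) [Field L]
    [Algebra K L] (f : M →ₗ[K] M) (μ : L) (hf : ∀ y, f.baseChange L y = μ • y) :
    ∃ c : K, ∀ x, f x = c • x := by
  let b := Module.Basis.ofVectorSpace K M
  have coord : ∀ x i, algebraMap K L (b.repr (f x) i) = μ * algebraMap K L (b.repr x i) := by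
    intro x i
    simpa [Algebra.smul_def] using congrArg (fun y => (b.baseChange L).repr y i) (hf (1 ⊗ₜ x))
  obtain ⟨m, hm⟩ := exists_ne (0 : M)
  obtain ⟨i, hi⟩ : ∃ i, b.repr m i ≠ 0 := by
    by_contra! h
    exact hm (b.ext_elem (by simpa using h))
  have hμ : μ = algebraMap K L (b.repr (f m) i / b.repr m i) := by
    rw [map_div₀, coord, mul_div_cancel_right₀ _ ((map_ne_zero _).mpr hi)]
  refine ⟨b.repr (f m) i / b.repr m i, fun x => b.ext_elem fun j => ?_⟩
  apply (algebraMap K L).injective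
  rw [coord, hμ, map_smul, Finsupp.smul_apply, smul_eq_mul, map_mul]

lemma RepAbsIrreducible.exists_eq_smul [FiniteDimensional K M] {τ : Representation K G M}
    (habs : RepAbsIrreducible τ) (f : M →ₗ[K] M) (hf : ∀ g x, f (τ g x) = τ g (f x)) :
    ∃ c : K, ∀ x, f x = c • x := by
  let L := AlgebraicClosure K
  have : Nontrivial (L ⊗[K] M) := habs.1
  have : Nontrivial M := habs.repIrreducible.1
  obtain ⟨μ, hμ⟩ := Module.End.exists_eigenvalue (f.baseChange L)
  have hinv : RepInvariant (repBaseChange L τ) (Module.End.eigenspace (f.baseChange L) μ) := by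
    intro g y hy
    rw [Module.End.mem_eigenspace_iff] at hy ⊢
    have hcomm : f ∘ₗ τ g = τ g ∘ₗ f := LinearMap.ext (hf g)
    change (f.baseChange L ∘ₗ (τ g).baseChange L) y = _
    rw [← LinearMap.baseChange_comp, hcomm, LinearMap.baseChange_comp, LinearMap.comp_apply, hy,
      map_smul]
    rfl
  have htop := (habs.2 _ hinv).resolve_left (Module.End.hasEigenvalue_iff.mp hμ)
  exact f.exists_eq_smul_of_baseChange_eq_smul L μ fun y =>
    Module.End.mem_eigenspace_iff.mp (htop ▸ Submodule.mem_top)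

lemma RepIrreducible.repEquiv_of_ne_zero {τ : Representation K G M} {τ' : Representation K G N}
    (hM : RepIrreducible τ) (hN : RepIrreducible τ') (f : M →ₗ[K] N)
    (hf : ∀ g x, f (τ g x) = τ' g (f x)) (hne : f ≠ 0) : RepEquiv τ τ' := by
  have hker : LinearMap.ker f = ⊥ := by
    refine (hM.2 _ fun g x hx => ?_).resolve_right fun h => hne (LinearMap.ker_eq_top.mp h)
    rw [LinearMap.mem_ker] at hx ⊢
    rw [hf, hx, map_zero]
  have hrange : LinearMap.range f = ⊤ := by
    refine (hN.2 _ ?_).resolve_left fun h => hne (LinearMap.range_eq_bot.mp h)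
    rintro g - ⟨x, rfl⟩
    exact ⟨τ g x, hf g x⟩
  exact ⟨LinearEquiv.ofBijective f ⟨LinearMap.ker_eq_bot.mp hker,
    LinearMap.range_eq_top.mp hrange⟩, hf⟩

lemma exists_le_repIrreducible_repSub [FiniteDimensional K M] {τ : Representation K G M}
    {T : Submodule K M} (hT : RepInvariant τ T) (hT0 : T ≠ ⊥) :
    ∃ S ≤ T, ∃ hS : RepInvariant τ S, RepIrreducible (repSub τ S hS) := by
  obtain ⟨S, ⟨hST, hS, hS0⟩, hmin⟩ := wellFounded_lt.has_min
    {S : Submodule K M | S ≤ T ∧ RepInvariant τ S ∧ S ≠ ⊥} ⟨T, le_rfl, hT, hT0⟩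
  refine ⟨S, hST, hS, Submodule.nontrivial_iff_ne_bot.mpr hS0, fun Q hQ => ?_⟩
  have hmap : RepInvariant τ (Q.map S.subtype) := by
    rintro g - ⟨x, hx, rfl⟩
    exact ⟨_, hQ g x hx, rfl⟩
  by_cases hQ0 : Q = ⊥
  · exact Or.inl hQ0
  refine Or.inr (Submodule.map_injective_of_injective S.injective_subtype ?_)
  rw [Submodule.map_subtype_top]
  refine (Submodule.map_subtype_le S Q).eq_of_not_lt fun hlt =>
    hmin _ ⟨hlt.le.trans hST, hmap, ?_⟩ hlt
  rwa [Ne, ← Submodule.map_bot S.subtype,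
    (Submodule.map_injective_of_injective S.injective_subtype).eq_iff]

lemma exists_repInvariant_isCompl [Finite G] [NeZero (Nat.card G : K)]
    {τ : Representation K G M} {X : Submodule K M} (hX : RepInvariant τ X) :
    ∃ C : Submodule K M, RepInvariant τ C ∧ IsCompl X C := by
  obtain ⟨C, hC⟩ := exists_isCompl (⟨X, fun g _ hx => hX g _ hx⟩ : Subrepresentation τ)
  exact ⟨C.toSubmodule, fun g _ hx => C.apply_mem_toSubmodule g hx,
    disjoint_iff.mpr (congrArg Subrepresentation.toSubmodule (disjoint_iff.mp hC.1)),
    codisjoint_iff.mpr (congrArg Subrepresentation.toSubmodule (codisjoint_iff.mp hC.2))⟩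

end Irreducible

namespace DirectSum.IsInternal

variable {K : Type*} [Field K] {V : Type*} [AddCommGroup V] [Module K V]
  {ι : Type*} [DecidableEq ι] {p : ι → Submodule K V} (hp : IsInternal p)

noncomputable def proj (i : ι) : V →ₗ[K] p i :=
  component K ι (fun i => p i) i ∘ₗ (LinearEquiv.ofBijective (coeLinearMap p) hp).symm.toLinearMap

lemma proj_apply_of_mem {i : ι} {x : V} (hx : x ∈ p i) : hp.proj i x = ⟨x, hx⟩ :=
  hp.ofBijective_coeLinearMap_of_mem hx

lemma proj_apply_of_mem_ne {i j : ι} (hij : i ≠ j) {x : V} (hx : x ∈ p i) : hp.proj j x = 0 :=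
  hp.ofBijective_coeLinearMap_of_mem_ne hij hx

include hp in
lemma linearMap_ext {N : Type*} [AddCommGroup N] [Module K N] {f g : V →ₗ[K] N}
    (h : ∀ i, ∀ x ∈ p i, f x = g x) : f = g := by
  refine LinearMap.ext_on (s := ⋃ i, (p i : Set V)) ?_ ?_
  · rw [← Submodule.iSup_eq_span, hp.submodule_iSup_eq_top]
  · rintro x ⟨-, ⟨i, rfl⟩, hx⟩
    exact h i x hx

lemma sum_proj [Fintype ι] (v : V) : ∑ i, (hp.proj i v : V) = v := by
  suffices ∑ i, (p i).subtype ∘ₗ hp.proj i = LinearMap.id by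
    simpa using congr($this v)
  refine hp.linearMap_ext fun i x hx => ?_
  rw [LinearMap.sum_apply, Finset.sum_eq_single i (fun j _ hji => by
    simp [hp.proj_apply_of_mem_ne hji.symm hx]) (by simp)]
  simp [hp.proj_apply_of_mem hx]

lemma proj_map {f : V →ₗ[K] V} (hf : ∀ i, ∀ x ∈ p i, f x ∈ p i) (i : ι) (v : V) :
    (hp.proj i (f v) : V) = f (hp.proj i v) := by
  suffices (p i).subtype ∘ₗ hp.proj i ∘ₗ f = f ∘ₗ (p i).subtype ∘ₗ hp.proj i from congr($this v)
  refine hp.linearMap_ext fun j x hx => ?_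
  obtain rfl | hji := eq_or_ne j i
  · simp [hp.proj_apply_of_mem hx, hp.proj_apply_of_mem (hf j x hx)]
  · simp [hp.proj_apply_of_mem_ne hji hx, hp.proj_apply_of_mem_ne hji (hf j x hx)]

end DirectSum.IsInternal

section Invariant

variable {K : Type*} [Field K] {G : Type*} [Group G]
  {M : Type*} [AddCommGroup M] [Module K M] {τ : Representation K G M}

@[simp]
lemma repSub_apply_coe {P : Submodule K M} (hP : RepInvariant τ P) (g : G) (x : P) :
    (repSub τ P hP g x : M) = τ g x :=
  rfl

lemma RepInvariant.inf {A B : Submodule K M} (hA : RepInvariant τ A) (hB : RepInvariant τ B) :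
    RepInvariant τ (A ⊓ B) :=
  fun g x hx => ⟨hA g x hx.1, hB g x hx.2⟩

lemma RepInvariant.iSup {ι : Type*} {p : ι → Submodule K M} (hp : ∀ i, RepInvariant τ (p i)) :
    RepInvariant τ (⨆ i, p i) := fun g =>
  show (⨆ i, p i) ≤ (⨆ i, p i).comap (τ g) from
    iSup_le fun i x hx => Submodule.mem_iSup_of_mem i (hp i g x hx)

end Invariant

section MultFree

variable {K : Type*} [Field K] {G : Type*} [Group G]
  {V : Type*} [AddCommGroup V] [Module K V] {ρ : Representation K G V}
  {ι : Type*} [DecidableEq ι] {p : ι → Submodule K V} (hp : DirectSum.IsInternal p)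
  (hinv : ∀ i, RepInvariant ρ (p i))

include hp in
lemma DirectSum.IsInternal.proj_comm (j : ι) (g : G) (v : V) :
    hp.proj j (ρ g v) = repSub ρ (p j) (hinv j) g (hp.proj j v) :=
  Subtype.ext (hp.proj_map (fun k x hx => hinv k g x hx) j v)

include hp in
lemma exists_eq_smul_of_comm_of_isInternal [Fintype ι] [FiniteDimensional K V]
    (habs : ∀ i, RepAbsIrreducible (repSub ρ (p i) (hinv i)))
    (hnoniso : ∀ i j, i ≠ j → ¬ RepEquiv (repSub ρ (p i) (hinv i)) (repSub ρ (p j) (hinv j)))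
    (i : ι) (f : p i →ₗ[K] V) (hf : ∀ g x, f (repSub ρ (p i) (hinv i) g x) = ρ g (f x)) :
    ∃ c : K, ∀ x, f x = c • (x : V) := by
  have hcomm : ∀ j g x, (hp.proj j ∘ₗ f) (repSub ρ (p i) (hinv i) g x) =
      repSub ρ (p j) (hinv j) g ((hp.proj j ∘ₗ f) x) := by
    intro j g x
    rw [LinearMap.comp_apply, hf, hp.proj_comm hinv]
    rfl
  have hzero : ∀ j, j ≠ i → hp.proj j ∘ₗ f = 0 := fun j hji => by
    by_contra hne
    exact hnoniso i j hji.symm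
      ((habs i).repIrreducible.repEquiv_of_ne_zero (habs j).repIrreducible _ (hcomm j) hne)
  obtain ⟨c, hc⟩ := (habs i).exists_eq_smul (hp.proj i ∘ₗ f) (hcomm i)
  refine ⟨c, fun x => ?_⟩
  rw [← hp.sum_proj (f x), Finset.sum_eq_single i
    (fun j _ hji => by simp [← LinearMap.comp_apply, hzero j hji]) (by simp)]
  exact congr(($(hc x) : V))

end MultFree

section Tensor

variable {K : Type*} [Field K] {V : Type*} [AddCommGroup V] [Module K V]
  {W : Type*} [AddCommGroup W] [Module K W] {κ : Type*} [DecidableEq κ]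

noncomputable def TensorProduct.basisRightCoord (b : Module.Basis κ K W) (k : κ) :
    V ⊗[K] W →ₗ[K] V :=
  Finsupp.lapply k ∘ₗ (TensorProduct.equivFinsuppOfBasisRight b).toLinearMap

namespace TensorProduct

@[simp]
lemma basisRightCoord_tmul (b : Module.Basis κ K W) (k : κ) (v : V) (w : W) :
    basisRightCoord b k (v ⊗ₜ w) = b.repr w k • v :=
  equivFinsuppOfBasisRight_apply_tmul_apply b v w k

lemma basisRightCoord_rTensor {V' : Type*} [AddCommGroup V'] [Module K V']
    (b : Module.Basis κ K W) (k : κ) (φ : V →ₗ[K] V') (x : V ⊗[K] W) :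
    basisRightCoord b k (φ.rTensor W x) = φ (basisRightCoord b k x) := by
  induction x using TensorProduct.induction_on with
  | zero => simp
  | tmul v w => simp
  | add x y hx hy => simp [hx, hy]

lemma ext_basisRightCoord (b : Module.Basis κ K W) {x y : V ⊗[K] W}
    (h : ∀ k, basisRightCoord b k x = basisRightCoord b k y) : x = y :=
  (equivFinsuppOfBasisRight b).injective (Finsupp.ext h)

end TensorProduct

end Tensor

section TensorWithTrivial

open TensorProduct

variable {K : Type*} [Field K] {G : Type*} [Group G]
  {V : Type*} [AddCommGroup V] [Module K V] {ρ : Representation K G V}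
  {W : Type*} [AddCommGroup W] [Module K W]

lemma Representation.tprod_one_apply (g : G) :
    ρ.tprod (1 : Representation K G W) g = (ρ g).rTensor W :=
  rfl

lemma exists_eq_tmul_of_comm [FiniteDimensional K W] {E : Type*} [AddCommGroup E] [Module K E]
    {τ : Representation K G E} (φ : E →ₗ[K] V)
    (hφ : ∀ f : E →ₗ[K] V, (∀ g x, f (τ g x) = ρ g (f x)) → ∃ c : K, ∀ x, f x = c • φ x)
    (f : E →ₗ[K] V ⊗[K] W) (hf : ∀ g x, f (τ g x) = ρ.tprod 1 g (f x)) :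
    ∃ w : W, ∀ x, f x = φ x ⊗ₜ w := by
  let b := Module.finBasis K W
  have hcoord : ∀ k, ∃ c : K, ∀ x, basisRightCoord b k (f x) = c • φ x := fun k =>
    hφ (basisRightCoord b k ∘ₗ f) fun g x => by
      rw [LinearMap.comp_apply, hf, Representation.tprod_one_apply, basisRightCoord_rTensor]
      rfl
  choose c hc using hcoord
  refine ⟨∑ k, c k • b k, fun x => ext_basisRightCoord b fun k => ?_⟩
  rw [hc, basisRightCoord_tmul, b.repr_sum_self]

variable {ι : Type*} [Fintype ι] [DecidableEq ι] {p : ι → Submodule K V}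
  (hp : DirectSum.IsInternal p) (hinv : ∀ i, RepInvariant ρ (p i))

include hp in
lemma exists_eq_map_flip_mk_of_repIrreducible [FiniteDimensional K V] [FiniteDimensional K W]
    (habs : ∀ i, RepAbsIrreducible (repSub ρ (p i) (hinv i)))
    (hnoniso : ∀ i j, i ≠ j → ¬ RepEquiv (repSub ρ (p i) (hinv i)) (repSub ρ (p j) (hinv j)))
    {S : Submodule K (V ⊗[K] W)} (hS : RepInvariant (ρ.tprod 1) S)
    (hirr : RepIrreducible (repSub _ S hS)) :
    ∃ i, ∃ w : W, S = (p i).map ((TensorProduct.mk K V W).flip w) := by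
  let b := Module.finBasis K W
  obtain ⟨s, hsS, hs0⟩ := S.exists_mem_ne_zero_of_ne_bot
    (Submodule.nontrivial_iff_ne_bot.mp hirr.1)
  obtain ⟨k, hk⟩ : ∃ k, basisRightCoord b k s ≠ 0 := by
    by_contra! h
    exact hs0 (ext_basisRightCoord b fun k => by simp [h])
  obtain ⟨i, hi⟩ : ∃ i, hp.proj i (basisRightCoord b k s) ≠ 0 := by
    by_contra! h
    rw [← hp.sum_proj (basisRightCoord b k s)] at hk
    exact hk (by simp [h])
  let A : S →ₗ[K] p i := hp.proj i ∘ₗ basisRightCoord b k ∘ₗ S.subtype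
  have hA : ∀ g x, A (repSub _ S hS g x) = repSub ρ (p i) (hinv i) g (A x) := fun g x => by
    simp only [A, LinearMap.comp_apply, Submodule.subtype_apply, repSub_apply_coe,
      Representation.tprod_one_apply, basisRightCoord_rTensor, hp.proj_comm hinv]
  obtain ⟨e, he⟩ := hirr.repEquiv_of_ne_zero (habs i).repIrreducible A hA
    fun h => hi congr($h ⟨s, hsS⟩)
  have he_symm : ∀ g x, e.symm (repSub ρ (p i) (hinv i) g x) = repSub _ S hS g (e.symm x) :=
    fun g x => e.symm_apply_eq.mpr (by rw [he, e.apply_symm_apply])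
  obtain ⟨w, hw⟩ := exists_eq_tmul_of_comm (p i).subtype
    (exists_eq_smul_of_comm_of_isInternal hp hinv habs hnoniso i) (S.subtype ∘ₗ e.symm.toLinearMap)
    fun g x => by
      rw [LinearMap.comp_apply, LinearEquiv.coe_coe, he_symm]
      rfl
  refine ⟨i, w, ?_⟩
  have hfactor :
      (TensorProduct.mk K V W).flip w ∘ₗ (p i).subtype = S.subtype ∘ₗ e.symm.toLinearMap :=
    LinearMap.ext fun x => (hw x).symm
  rw [← Submodule.range_subtype (p i), ← LinearMap.range_comp, hfactor, LinearMap.range_comp,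
    LinearEquiv.range, Submodule.map_top, Submodule.range_subtype]

end TensorWithTrivial

section TensorColon

variable {K : Type*} [Field K] {V : Type*} [AddCommGroup V] [Module K V]
  {W : Type*} [AddCommGroup W] [Module K W]

def Submodule.tensorColon (U : Submodule K (V ⊗[K] W)) (P : Submodule K V) : Submodule K W :=
  ⨅ v : P, U.comap (TensorProduct.mk K V W v)

namespace Submodule

variable {U : Submodule K (V ⊗[K] W)} {P : Submodule K V}

lemma mem_tensorColon {w : W} : w ∈ U.tensorColon P ↔ ∀ v ∈ P, v ⊗ₜ w ∈ U := by
  simp [tensorColon]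

lemma range_map_tensorColon_le :
    LinearMap.range (TensorProduct.map P.subtype (U.tensorColon P).subtype) ≤ U := by
  rintro - ⟨y, rfl⟩
  induction y using TensorProduct.induction_on with
  | zero => simp
  | tmul v w => exact mem_tensorColon.mp w.2 v v.2
  | add x y hx hy => rw [map_add]; exact add_mem hx hy

lemma map_flip_mk_le_range_map_tensorColon {w : W}
    (hle : P.map ((TensorProduct.mk K V W).flip w) ≤ U) :
    P.map ((TensorProduct.mk K V W).flip w) ≤
      LinearMap.range (TensorProduct.map P.subtype (U.tensorColon P).subtype) := by
  have hw : w ∈ U.tensorColon P := mem_tensorColon.mpr fun v hv => hle ⟨v, hv, rfl⟩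
  rintro - ⟨v, hv, rfl⟩
  exact ⟨⟨v, hv⟩ ⊗ₜ ⟨w, hw⟩, rfl⟩

end Submodule

variable {G H : Type*} [Group G] [Group H]

lemma RepInvariant.tensorColon {σ : Representation K H W} {U : Submodule K (V ⊗[K] W)}
    (hU : ∀ h v w, v ⊗ₜ w ∈ U → v ⊗ₜ σ h w ∈ U) (P : Submodule K V) :
    RepInvariant σ (U.tensorColon P) := fun h w hw =>
  Submodule.mem_tensorColon.mpr fun v hv => hU h v w (Submodule.mem_tensorColon.mp hw v hv)

lemma RepInvariant.range_map_subtype {ρ : Representation K G V} {P : Submodule K V}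
    (hP : RepInvariant ρ P) (Q : Submodule K W) :
    RepInvariant (ρ.tprod 1) (LinearMap.range (TensorProduct.map P.subtype Q.subtype)) := by
  rintro g - ⟨y, rfl⟩
  refine ⟨(((ρ g).restrict (hP g)).rTensor Q) y, ?_⟩
  rw [Representation.tprod_one_apply, ← LinearMap.comp_apply, ← LinearMap.comp_apply]
  congr 1
  ext v w
  rfl

variable (ρ : Representation K G V) (σ : Representation K H W)

lemma repProdTensor_inr_tmul (h : H) (v : V) (w : W) :
    repProdTensor ρ σ (1, h) (v ⊗ₜ w) = v ⊗ₜ σ h w := by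
  change ρ 1 v ⊗ₜ σ h w = _
  rw [map_one, Module.End.one_apply]

lemma repProdTensor_inl (g : G) : repProdTensor ρ σ (g, 1) = ρ.tprod 1 g := by
  change TensorProduct.map (ρ g) (σ 1) = TensorProduct.map (ρ g) 1
  rw [map_one]

end TensorColon

lemma natCast_ne_zero_of_ringChar {K : Type*} [Field K] {n : ℕ}
    (hchar : ringChar K = 0 ∨ Nat.Coprime (ringChar K) n) (hn : n ≠ 0) : (n : K) ≠ 0 := by
  rw [Ne, ringChar.spec]
  rcases hchar with h | h
  · rwa [h, zero_dvd_iff]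
  · exact fun hdvd => CharP.ringChar_ne_one (Nat.Coprime.eq_one_of_dvd h hdvd)

/-- If `E = ⊕ᵢ Eᵢ` is a multiplicity-free `K[G]`-module and `F` is a
finite-dimensional `K[H]`-module, then every `K[G×H]`-submodule `U` of `E ⊗ F` has the form
`U = ⊕ᵢ Eᵢ ⊗ Fᵢ` for suitable `K[H]`-submodules `Fᵢ` of `F`. -/
theorem statement_14 {K : Type*} [Field K] {G H : Type*} [Group G] [Group H]
    [Fintype G] [Fintype H]
    {V W : Type*} [AddCommGroup V] [Module K V] [FiniteDimensional K V]
    [AddCommGroup W] [Module K W] [FiniteDimensional K W]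
    (hchar : ringChar K = 0 ∨
      (Nat.Coprime (ringChar K) (Fintype.card G) ∧
        Nat.Coprime (ringChar K) (Fintype.card H)))
    (ρ : Representation K G V) (σ : Representation K H W)
    (r : ℕ) (p : Fin r → Submodule K V) (hinv : ∀ i, RepInvariant ρ (p i))
    (habs : ∀ i, RepAbsIrreducible (repSub ρ (p i) (hinv i)))
    (hnoniso : ∀ i j, i ≠ j →
      ¬ RepEquiv (repSub ρ (p i) (hinv i)) (repSub ρ (p j) (hinv j)))
    (hindep : iSupIndep p) (hsup : (⨆ i, p i) = ⊤)
    (U : Submodule K (TensorProduct K V W)) (hU : RepInvariant (repProdTensor ρ σ) U) :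
    ∃ q : Fin r → Submodule K W, (∀ i, RepInvariant σ (q i)) ∧
      U = ⨆ i, LinearMap.range (TensorProduct.map (p i).subtype (q i).subtype) := by
  classical
  have : NeZero (Nat.card G : K) := ⟨Nat.card_eq_fintype_card (α := G) ▸
    natCast_ne_zero_of_ringChar (hchar.imp_right And.left) Fintype.card_ne_zero⟩
  have hp : DirectSum.IsInternal p :=
    DirectSum.isInternal_submodule_of_iSupIndep_of_iSup_eq_top hindep hsup
  have hUG : RepInvariant (ρ.tprod 1) U := fun g => repProdTensor_inl ρ σ g ▸ hU (g, 1)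
  set X := ⨆ i, LinearMap.range (TensorProduct.map (p i).subtype (U.tensorColon (p i)).subtype)
  have hXU : X ≤ U := iSup_le fun i => Submodule.range_map_tensorColon_le
  obtain ⟨C, hC, hXC⟩ :=
    exists_repInvariant_isCompl (RepInvariant.iSup fun i =>
      (hinv i).range_map_subtype (U.tensorColon (p i)))
  have hUC : U ⊓ C = ⊥ := by
    by_contra hne
    obtain ⟨S, hSUC, hS, hirr⟩ := exists_le_repIrreducible_repSub (hUG.inf hC) hne
    obtain ⟨i, w, rfl⟩ := exists_eq_map_flip_mk_of_repIrreducible hp hinv habs hnoniso hS hirr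
    have hSX : _ ≤ X := (Submodule.map_flip_mk_le_range_map_tensorColon
      (hSUC.trans inf_le_left)).trans (le_iSup_of_le i le_rfl)
    exact Submodule.nontrivial_iff_ne_bot.mp hirr.1
      (eq_bot_iff.mpr (hXC.1 hSX (hSUC.trans inf_le_right)))
  refine ⟨fun i => U.tensorColon (p i), fun i => RepInvariant.tensorColon
    (fun h v w hvw => repProdTensor_inr_tmul ρ σ h v w ▸ hU (1, h) _ hvw) _,
    le_antisymm (le_of_eq ?_) hXU⟩
  calc U = (X ⊔ C) ⊓ U := by rw [hXC.sup_eq_top, top_inf_eq]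
    _ = X := by rw [sup_inf_assoc_of_le _ hXU, inf_comm, hUC, sup_bot_eq]
end

section
/- Let G and H be finite groups and K a field whose characteristic is either zero or coprime to both |G| and |H|. If E' is an absolutely irreducible finite-dimensional K[G]-module and F' is an irreducible finite-dimensional K[H]-module, then E' ⊗_K F', regarded as a K[G×H]-module via (g,h)·(x ⊗ y) = gx ⊗ hy, is irreducible. -/
/-!
By Maschke's theorem for the action of `G` on the first factor, a `G × H`-invariant subspace
`p ⊆ V ⊗ W` is the range of a `G`-equivariant projection `π`. Every `G`-endomorphism of `V` is a
scalar (Schur's lemma over the algebraic closure, descended to `K`); applied to the slices of `π`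
this gives `π = id ⊗ q` for some `q : End W`. Hence `p = V ⊗ range q`, where `range q` is
`H`-invariant, hence `0` or `W`.
-/

open scoped TensorProduct

section AbsolutelyIrreducible

variable {K : Type*} [Field K] {G : Type*} [Group G] {V : Type*} [AddCommGroup V] [Module K V]

lemma RepAbsIrreducible.nontrivial {ρ : Representation K G V} (hρ : RepAbsIrreducible ρ) :
    Nontrivial V :=
  (Module.FaithfullyFlat.nontrivial_tensorProduct_iff_right K (AlgebraicClosure K)).mp hρ.1

lemma RepIrreducible.exists_eq_smul_one_of_commute [IsAlgClosed K] [FiniteDimensional K V]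
    {ρ : Representation K G V} (hρ : RepIrreducible ρ) (φ : Module.End K V)
    (hφ : ∀ g, Commute φ (ρ g)) : ∃ c : K, φ = c • 1 := by
  have := hρ.1
  obtain ⟨μ, hμ⟩ := φ.exists_eigenvalue
  have hinv : RepInvariant ρ (φ.eigenspace μ) := fun g x hx => by
    rw [Module.End.mem_eigenspace_iff] at hx ⊢
    rw [← Module.End.mul_apply, (hφ g).eq, Module.End.mul_apply, hx, map_smul]
  have htop : φ.eigenspace μ = ⊤ := (hρ.2 _ hinv).resolve_left hμ
  exact ⟨μ, LinearMap.ext fun x => Module.End.mem_eigenspace_iff.mp (htop ▸ Submodule.mem_top)⟩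

lemma LinearMap.exists_eq_smul_one_of_baseChange_eq_smul_one [Nontrivial V]
    {L : Type*} [Field L] [Algebra K L] (φ : Module.End K V) (μ : L)
    (h : φ.baseChange L = μ • 1) : ∃ c : K, φ = c • 1 := by
  obtain ⟨v, hv⟩ := exists_ne (0 : V)
  obtain ⟨f, hf⟩ := Module.Projective.exists_dual_eq_one K hv
  have hμ : algebraMap K L (f (φ v)) = μ := by
    have := congr(TensorProduct.rid K L (f.lTensor L ($h (1 ⊗ₜ v))))
    simpa [hf, Algebra.algebraMap_eq_smul_one, TensorProduct.smul_tmul'] using this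
  refine ⟨f (φ v), LinearMap.baseChangeHom_injective K V L ?_⟩
  simp [h, ← hμ]

lemma RepAbsIrreducible.exists_eq_smul_one_of_commute [FiniteDimensional K V]
    {ρ : Representation K G V} (hρ : RepAbsIrreducible ρ) (φ : Module.End K V)
    (hφ : ∀ g, Commute φ (ρ g)) : ∃ c : K, φ = c • 1 := by
  have := hρ.nontrivial
  obtain ⟨μ, hμ⟩ := RepIrreducible.exists_eq_smul_one_of_commute hρ (φ.baseChange _) fun g => by
    show φ.baseChange _ * (ρ g).baseChange _ = (ρ g).baseChange _ * φ.baseChange _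
    rw [← LinearMap.baseChange_mul, (hφ g).eq, LinearMap.baseChange_mul]
  exact φ.exists_eq_smul_one_of_baseChange_eq_smul_one μ hμ

end AbsolutelyIrreducible

section Maschke

variable {K : Type*} [Field K] {G : Type*} [Group G] [Fintype G]
  {M : Type*} [AddCommGroup M] [Module K M]

lemma Fintype.cast_card_ne_zero_of_ringChar
    (h : ringChar K = 0 ∨ (ringChar K).Coprime (Fintype.card G)) :
    (Fintype.card G : K) ≠ 0 := by
  rw [Ne, ringChar.spec]
  intro hdvd
  rcases h with h | h
  · rw [h, zero_dvd_iff] at hdvd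
    exact Fintype.card_ne_zero hdvd
  · exact CharP.ringChar_ne_one (Nat.Coprime.eq_one_of_dvd h hdvd)

lemma RepInvariant.exists_equivariant_projection (hG : (Fintype.card G : K) ≠ 0)
    {τ : Representation K G M} {U : Submodule K M} (hU : RepInvariant τ U) :
    ∃ π : Module.End K M, LinearMap.range π = U ∧ ∀ g, Commute π (τ g) := by
  obtain ⟨U', hUU'⟩ := U.exists_isCompl
  let π₀ : Module.End K M := U.subtype ∘ₗ U.projectionOnto U' hUU'
  have := invertibleOfNonzero hG
  let π := (τ.linHom τ).averageMap π₀
  have hπ : ∀ x, π x = ⅟(Fintype.card G : K) • ∑ g, τ g (π₀ (τ g⁻¹ x)) := by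
    intro x
    simp [π, GroupAlgebra.average, map_sum, LinearMap.sum_apply]
  have hπ₀U : ∀ x ∈ U, π₀ x = x := fun x hx => by
    simp [π₀, Submodule.projectionOnto_apply_left hUU' ⟨x, hx⟩]
  have hπτ : τ.IsIntertwiningMap τ π :=
    (Representation.mem_linHom_invariants_iff_isIntertwining π).mp
      ((τ.linHom τ).averageMap_invariant π₀)
  refine ⟨π, le_antisymm ?_ ?_, fun g => LinearMap.ext (hπτ.isIntertwining g)⟩
  · rintro _ ⟨x, rfl⟩
    rw [hπ]
    exact U.smul_mem _ (U.sum_mem fun g _ => hU g _ (by simp [π₀]))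
  · intro x hx
    refine ⟨x, ?_⟩
    simp [hπ, hπ₀U _ (hU _ x hx), ← Nat.cast_smul_eq_nsmul K, smul_smul]

end Maschke

namespace TensorProduct

variable {K : Type*} [Field K] {V W : Type*} [AddCommGroup V] [Module K V]
  [AddCommGroup W] [Module K W]

def contrRight (f : Module.Dual K W) : V ⊗[K] W →ₗ[K] V :=
  TensorProduct.rid K V ∘ₗ f.lTensor V

def contrLeft (f : Module.Dual K V) : V ⊗[K] W →ₗ[K] W :=
  TensorProduct.lid K W ∘ₗ f.rTensor W

@[simp] lemma contrRight_tmul (f : Module.Dual K W) (v : V) (w : W) :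
    contrRight f (v ⊗ₜ w) = f w • v := by
  simp [contrRight]

@[simp] lemma contrLeft_tmul (f : Module.Dual K V) (v : V) (w : W) :
    contrLeft f (v ⊗ₜ w) = f v • w := by
  simp [contrLeft]

lemma contrRight_rTensor (f : Module.Dual K W) (φ : Module.End K V) (x : V ⊗[K] W) :
    contrRight f (φ.rTensor W x) = φ (contrRight f x) := by
  induction x using TensorProduct.induction_on with
  | zero => simp
  | tmul v w => simp
  | add x y hx hy => simp only [map_add, hx, hy]

lemma contrLeft_lTensor (f : Module.Dual K V) (q : Module.End K W) (x : V ⊗[K] W) :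
    contrLeft f (q.lTensor V x) = q (contrLeft f x) := by
  induction x using TensorProduct.induction_on with
  | zero => simp
  | tmul v w => simp
  | add x y hx hy => simp only [map_add, hx, hy]

lemma apply_contrRight (f : Module.Dual K V) (f' : Module.Dual K W) (x : V ⊗[K] W) :
    f (contrRight f' x) = f' (contrLeft f x) := by
  induction x using TensorProduct.induction_on with
  | zero => simp
  | tmul v w => simp [mul_comm]
  | add x y hx hy => simp only [map_add, hx, hy]

lemma ext_contrRight {x y : V ⊗[K] W}
    (h : ∀ f : Module.Dual K W, contrRight (V := V) f x = contrRight f y) :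
    x = y := by
  classical
  let b := Module.Free.chooseBasis K W
  have hcoord : ∀ (z : V ⊗[K] W) i,
      equivFinsuppOfBasisRight b z i = contrRight (b.coord i) z := by
    intro z i
    induction z using TensorProduct.induction_on with
    | zero => simp
    | tmul v w => simp
    | add z z' hz hz' => simp only [map_add, Finsupp.add_apply, hz, hz']
  exact (equivFinsuppOfBasisRight b).injective (Finsupp.ext fun i => by rw [hcoord, hcoord, h])

end TensorProduct

section ExternalTensor

open TensorProduct

variable {K : Type*} [Field K] {G H : Type*} [Group G] [Group H]
  {V W : Type*} [AddCommGroup V] [Module K V] [AddCommGroup W] [Module K W]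

lemma RepAbsIrreducible.exists_eq_lTensor_of_commute [FiniteDimensional K V]
    {ρ : Representation K G V} (hρ : RepAbsIrreducible ρ) (π : Module.End K (V ⊗[K] W))
    (hπ : ∀ g, Commute π ((ρ g).rTensor W)) : ∃ q : Module.End K W, π = q.lTensor V := by
  have := hρ.nontrivial
  obtain ⟨v₀, hv₀⟩ := exists_ne (0 : V)
  obtain ⟨f₀, hf₀⟩ := Module.Projective.exists_dual_eq_one K hv₀
  refine ⟨contrLeft f₀ ∘ₗ π ∘ₗ TensorProduct.mk K V W v₀, TensorProduct.ext' fun v w => ?_⟩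
  refine ext_contrRight fun f => ?_
  -- The slice `v ↦ contrRight f (π (v ⊗ w))` is a scalar `c`; evaluating it at `v₀` shows
  -- that `c = f (q w)`.
  obtain ⟨c, hc⟩ := hρ.exists_eq_smul_one_of_commute
    (contrRight f ∘ₗ π ∘ₗ (TensorProduct.mk K V W).flip w) fun g => LinearMap.ext fun v => by
      have := LinearMap.congr_fun (hπ g).eq (v ⊗ₜ w)
      simp_all [contrRight_rTensor]
  have hslice : ∀ v, contrRight f (π (v ⊗ₜ w)) = c • v := fun v => LinearMap.congr_fun hc v
  simp [hslice, ← apply_contrRight, hf₀]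

lemma mem_range_lTensor_tmul_iff {v : V} (hv : v ≠ 0) (q : Module.End K W) (w : W) :
    v ⊗ₜ[K] w ∈ LinearMap.range (q.lTensor V) ↔ w ∈ LinearMap.range q := by
  obtain ⟨f, hf⟩ := Module.Projective.exists_dual_eq_one K hv
  refine ⟨fun ⟨x, hx⟩ => ⟨contrLeft f x, ?_⟩, fun ⟨w', hw'⟩ => ⟨v ⊗ₜ w', by simp [hw']⟩⟩
  simpa [hf, contrLeft_lTensor] using congr_arg (contrLeft f) hx

@[simp] lemma repProdTensor_apply_tmul (ρ : Representation K G V) (σ : Representation K H W)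
    (gh : G × H) (v : V) (w : W) :
    repProdTensor ρ σ gh (v ⊗ₜ w) = ρ gh.1 v ⊗ₜ σ gh.2 w :=
  rfl

lemma repProdTensor_mk_one (ρ : Representation K G V) (σ : Representation K H W) (g : G) :
    repProdTensor ρ σ (g, 1) = (ρ g).rTensor W :=
  TensorProduct.ext' fun v w => by simp

end ExternalTensor

theorem statement_15_general {K : Type*} [Field K] {G H : Type*} [Group G] [Group H]
    [Fintype G] [Fintype H]
    {V W : Type*} [AddCommGroup V] [Module K V] [FiniteDimensional K V]
    [AddCommGroup W] [Module K W]
    (hchar : ringChar K = 0 ∨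
      (Nat.Coprime (ringChar K) (Fintype.card G) ∧
        Nat.Coprime (ringChar K) (Fintype.card H)))
    (ρ : Representation K G V) (σ : Representation K H W)
    (hρ : RepAbsIrreducible ρ) (hσ : RepIrreducible σ) :
    RepIrreducible (repProdTensor ρ σ) := by
  have hG : (Fintype.card G : K) ≠ 0 :=
    Fintype.cast_card_ne_zero_of_ringChar (hchar.imp_right And.left)
  have := hρ.nontrivial
  have := hσ.1
  refine ⟨inferInstance, fun p hp => ?_⟩
  obtain ⟨π, hπp, hπ⟩ := RepInvariant.exists_equivariant_projection hG
    (τ := (repProdTensor ρ σ).comp (MonoidHom.inl G H)) fun g => hp (g, 1)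
  obtain ⟨q, rfl⟩ := hρ.exists_eq_lTensor_of_commute π fun g => by
    simpa [repProdTensor_mk_one] using hπ g
  obtain ⟨v, hv⟩ := exists_ne (0 : V)
  have hq : RepInvariant σ (LinearMap.range q) := fun h w hw => by
    rw [← mem_range_lTensor_tmul_iff hv, hπp] at hw ⊢
    simpa using hp (1, h) _ hw
  rcases hσ.2 _ hq with hq | hq
  · left
    rw [← hπp, LinearMap.range_eq_bot.mp hq, LinearMap.lTensor_zero, LinearMap.range_zero]
  · right
    rw [← hπp, LinearMap.range_eq_top]
    exact LinearMap.lTensor_surjective V (LinearMap.range_eq_top.mp hq)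

/-- If `E'` is an absolutely irreducible finite-dimensional
`K[G]`-module and `F'` an irreducible finite-dimensional `K[H]`-module (char `K` zero or
coprime to `|G|` and `|H|`), then `E' ⊗ F'` is an irreducible `K[G×H]`-module. -/
theorem statement_15 {K : Type*} [Field K] {G H : Type*} [Group G] [Group H]
    [Fintype G] [Fintype H]
    {V W : Type*} [AddCommGroup V] [Module K V] [FiniteDimensional K V]
    [AddCommGroup W] [Module K W] [FiniteDimensional K W]
    (hchar : ringChar K = 0 ∨
      (Nat.Coprime (ringChar K) (Fintype.card G) ∧
        Nat.Coprime (ringChar K) (Fintype.card H)))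
    (ρ : Representation K G V) (σ : Representation K H W)
    (hρ : RepAbsIrreducible ρ) (hσ : RepIrreducible σ) :
    RepIrreducible (repProdTensor ρ σ) :=
  statement_15_general hchar ρ σ hρ hσ
end
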